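/- If F : Mod-R → Mod-S and G : Mod-S → Mod-R are mutually inverse category equivalences, then F(R) (with its induced R-S bimodule structure) is a progenerator for Mod-S, and G(S) ≅ Hom_S(F(R), S) as S-R bimodules. -/

import Mathlib

open MulOpposite CategoryTheory

/-- `P` is a generator for the category of right `S`-modules:
the functor `Hom_S(P, -)` is faithful. -/
def IsGenerator (S P : Type) [Ring S] [AddCommGroup P] [Module Sᵐᵒᵖ P] : Prop :=
  ∀ (M N : Type) [AddCommGroup M] [Module Sᵐᵒᵖ M] [AddCommGroup N] [Module Sᵐᵒᵖ N]
    (f g : M →ₗ[Sᵐᵒᵖ] N), (∀ h : P →ₗ[Sᵐᵒᵖ] M, f.comp h = g.comp h) → f = g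

/-- Left multiplication by `r` on `R`, as an endomorphism of the right regular
module `R_R`. -/
def lmul (R : Type) [Ring R] (r : R) : R →ₗ[Rᵐᵒᵖ] R where
  toFun x := r * x
  map_add' := mul_add r
  map_smul' a x := by
    simp only [MulOpposite.smul_eq_mul_unop, RingHom.id_apply, mul_assoc]

/-! An equivalence `F ⊣ G` gives isomorphisms `G N ≅ Hom_R(R, G N) ≅ Hom_S(F R, N)`, natural in
`N` and compatible with the left `R`-actions; for `N = S_S` this is the bimodule isomorphism.
Being projective and being a separator are categorical properties, hence pass from `R_R` to
`F R`. So is finite generation: it says that `⊤` is a compact element of the submodule lattice,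
and `F` induces an order isomorphism between the subobject lattices of `R_R` and of `F R`. -/

theorem OrderIso.map_isCompactElement {α β : Type*} [PartialOrder α] [PartialOrder β]
    (e : α ≃o β) {k : α} (hk : IsCompactElement k) : IsCompactElement (e k) := by
  intro s u hne hdir hlub hku
  obtain ⟨_, ⟨x, hx, rfl⟩, hkx⟩ := hk (e.symm '' s) (e.symm u) (hne.image _)
    (directedOn_image.2 (hdir.mono fun _ _ h ↦ e.symm.monotone h))
    (e.symm.isLUB_image'.2 hlub) (e.le_symm_apply.2 hku)
  exact ⟨x, hx, e.le_symm_apply.1 hkx⟩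

theorem Module.finite_iff_isCompactElement_top {R M : Type*} [Semiring R] [AddCommMonoid M]
    [Module R M] : Module.Finite R M ↔ IsCompactElement (⊤ : Submodule R M) :=
  Module.finite_def.trans (Submodule.fg_iff_compact ⊤)

namespace CategoryTheory.Equivalence

universe v u₁ u₂

variable {A : Type u₁} {B : Type u₂} [Ring A] [Ring B]
  (e : ModuleCat.{v} A ≌ ModuleCat.{v} B)

noncomputable def submoduleOrderIso (X : ModuleCat.{v} A) :
    Submodule A X ≃o Submodule B (e.functor.obj X) :=
  (ModuleCat.subobjectModule X).symm.trans <|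
    (Subobject.lowerEquivalence (MonoOver.congr X e)).toOrderIso.trans
      (ModuleCat.subobjectModule _)

theorem module_finite_functor_obj (X : ModuleCat.{v} A) [Module.Finite A X] :
    Module.Finite B (e.functor.obj X) := by
  rw [Module.finite_iff_isCompactElement_top] at *
  simpa using (e.submoduleOrderIso X).map_isCompactElement ‹IsCompactElement (⊤ : Submodule A X)›

theorem module_projective_functor_obj [Small.{v} B] (X : ModuleCat.{v} A)
    [Module.Projective A X] : Module.Projective B (e.functor.obj X) :=
  have : Projective (e.functor.obj X) := (e.map_projective_iff X).2 inferInstance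
  inferInstance

end CategoryTheory.Equivalence

theorem CategoryTheory.IsSeparator.isGenerator {S : Type} [Ring S] {P : ModuleCat Sᵐᵒᵖ}
    (hP : IsSeparator P) : IsGenerator S P := fun _ _ _ _ _ _ f g hfg ↦
  congrArg ModuleCat.Hom.hom <| (isSeparator_def P).1 hP (ModuleCat.ofHom f) (ModuleCat.ofHom g)
    fun h ↦ ModuleCat.hom_ext (hfg h.hom)

section RightRegular

universe u

variable {R : Type u} [Ring R]

instance : Module.Free Rᵐᵒᵖ R := Module.Free.of_equiv (opLinearEquiv Rᵐᵒᵖ).symm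

instance : Module.Finite Rᵐᵒᵖ R := Module.Finite.equiv (opLinearEquiv Rᵐᵒᵖ).symm

noncomputable def rightRegularHomEquiv (M : ModuleCat.{u} Rᵐᵒᵖ) :
    (ModuleCat.of Rᵐᵒᵖ R ⟶ M) ≃+ M where
  toFun f := f 1
  invFun y := ModuleCat.ofHom
    (LinearMap.toSpanSingleton Rᵐᵒᵖ M y ∘ₗ (opLinearEquiv Rᵐᵒᵖ).toLinearMap)
  left_inv f := by
    ext
    simp
  right_inv y := one_smul Rᵐᵒᵖ y
  map_add' _ _ := rfl

theorem isSeparator_rightRegular : IsSeparator (ModuleCat.of Rᵐᵒᵖ R) := by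
  refine (isSeparator_def _).2 fun X Y f g hfg ↦ ModuleCat.hom_ext (LinearMap.ext fun x ↦ ?_)
  obtain ⟨φ, rfl⟩ := (rightRegularHomEquiv X).surjective x
  exact congr(rightRegularHomEquiv Y $(hfg φ))

end RightRegular

theorem rightRegularHomEquiv_lmul_comp {R : Type} [Ring R] (M : ModuleCat Rᵐᵒᵖ) (r : R)
    (f : ModuleCat.of Rᵐᵒᵖ R ⟶ M) :
    rightRegularHomEquiv M (ModuleCat.ofHom (lmul R r) ≫ f) = op r • rightRegularHomEquiv M f := by
  simpa [rightRegularHomEquiv, lmul] using f.hom.map_smul (op r) (1 : R)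

namespace CategoryTheory.Equivalence

universe u

variable {R S : Type u} [Ring R] [Ring S] (e : ModuleCat.{u} Rᵐᵒᵖ ≌ ModuleCat.{u} Sᵐᵒᵖ)

noncomputable def inverseObjAddEquivHom (N : ModuleCat.{u} Sᵐᵒᵖ) :
    e.inverse.obj N ≃+ (e.functor.obj (ModuleCat.of Rᵐᵒᵖ R) →ₗ[Sᵐᵒᵖ] N) :=
  have := e.functor.additive_of_preserves_binary_products
  (rightRegularHomEquiv _).symm.trans <|
    (e.toAdjunction.homAddEquiv _ _).symm.trans ModuleCat.homAddEquiv

theorem inverseObjAddEquivHom_map {N N' : ModuleCat.{u} Sᵐᵒᵖ} (g : N ⟶ N')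
    (x : e.inverse.obj N) :
    e.inverseObjAddEquivHom N' (e.inverse.map g x) = g.hom ∘ₗ e.inverseObjAddEquivHom N x := by
  obtain ⟨φ, rfl⟩ := (rightRegularHomEquiv _).surjective x
  have : e.inverse.map g (rightRegularHomEquiv _ φ) =
      rightRegularHomEquiv _ (φ ≫ e.inverse.map g) := rfl
  simp [inverseObjAddEquivHom, this, Adjunction.homEquiv_naturality_right_symm]

end CategoryTheory.Equivalence

theorem CategoryTheory.Equivalence.inverseObjAddEquivHom_smul {R S : Type} [Ring R] [Ring S]
    (e : ModuleCat Rᵐᵒᵖ ≌ ModuleCat Sᵐᵒᵖ) (N : ModuleCat Sᵐᵒᵖ) (r : R) (x : e.inverse.obj N) :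
    e.inverseObjAddEquivHom N (MulOpposite.op r • x) =
      e.inverseObjAddEquivHom N x ∘ₗ (e.functor.map (ModuleCat.ofHom (lmul R r))).hom := by
  obtain ⟨φ, rfl⟩ := (rightRegularHomEquiv _).surjective x
  simp [inverseObjAddEquivHom, ← rightRegularHomEquiv_lmul_comp,
    Adjunction.homEquiv_naturality_left_symm]

/-- **from Morita II.** If `F : Mod-R → Mod-S` and
`G : Mod-S → Mod-R` are mutually inverse category equivalences, then `F(R)`
(with its induced `R`-`S` bimodule structure, the left `R`-action being induced
by `F` applied to left multiplications on `R`) is a progenerator for `Mod-S`,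
and `G(S) ≅ Hom_S(F(R), S)` as `S`-`R` bimodules. -/
theorem morita_II (R S : Type) [Ring R] [Ring S]
    (F : ModuleCat Rᵐᵒᵖ ⥤ ModuleCat Sᵐᵒᵖ) (G : ModuleCat Sᵐᵒᵖ ⥤ ModuleCat Rᵐᵒᵖ)
    (η : F ⋙ G ≅ 𝟭 (ModuleCat Rᵐᵒᵖ)) (ε : G ⋙ F ≅ 𝟭 (ModuleCat Sᵐᵒᵖ)) :
    Module.Finite Sᵐᵒᵖ (F.obj (ModuleCat.of Rᵐᵒᵖ R)) ∧
    Module.Projective Sᵐᵒᵖ (F.obj (ModuleCat.of Rᵐᵒᵖ R)) ∧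
    IsGenerator S (F.obj (ModuleCat.of Rᵐᵒᵖ R)) ∧
    ∃ e : G.obj (ModuleCat.of Sᵐᵒᵖ S) ≃+
        ((F.obj (ModuleCat.of Rᵐᵒᵖ R)) →ₗ[Sᵐᵒᵖ] S),
      (∀ (s : S) (x : G.obj (ModuleCat.of Sᵐᵒᵖ S)),
        e (G.map (ModuleCat.ofHom (lmul S s)) x) = (lmul S s).comp (e x)) ∧
      (∀ (r : R) (x : G.obj (ModuleCat.of Sᵐᵒᵖ S))
        (v : F.obj (ModuleCat.of Rᵐᵒᵖ R)),
        e (op r • x) v = e x (F.map (ModuleCat.ofHom (lmul R r)) v)) := by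
  let E : ModuleCat Rᵐᵒᵖ ≌ ModuleCat Sᵐᵒᵖ := CategoryTheory.Equivalence.mk F G η.symm ε
  exact ⟨E.module_finite_functor_obj _, E.module_projective_functor_obj _,
    (isSeparator_rightRegular.of_equivalence E).isGenerator, E.inverseObjAddEquivHom _,
    fun s x ↦ E.inverseObjAddEquivHom_map _ x,
    fun r x v ↦ congr($(E.inverseObjAddEquivHom_smul _ r x) v)⟩
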